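/- Let a reaction network on m species with reactions y_k → y_k' (k = 1,…,K) be weakly reversible and have deficiency zero, i.e. |C| − ℓ − s = 0, where |C| is the number of complexes, ℓ is the number of connected components (linkage classes) of the reaction graph, and s = dim span_ℝ{y_k' − y_k : 1 ≤ k ≤ K}. Then for every choice of rate constants κ_k > 0 there exists c ∈ ℝ^m_{>0} that is a complex balanced equilibrium: for every complex z ∈ C, ∑_{k : y_k' = z} κ_k c^{y_k} = ∑_{k : y_k = z} κ_k c^{y_k}. -/

import Mathlib

open Finset Filter

/-- General (non-mass action) intensity function:
`λ_k(x) = κ_k ∏_i ∏_{j=0}^{y_{ki}-1} θ_i(x_i - j)`. -/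
noncomputable def genIntensity (m K : ℕ) (y : Fin K → Fin m → ℕ) (κ : Fin K → ℝ)
    (θ : Fin m → ℤ → ℝ) (k : Fin K) (x : Fin m → ℤ) : ℝ :=
  κ k * ∏ i, ∏ j ∈ Finset.range (y k i), θ i (x i - j)

/-- Product-form measure `π_c(x) = ∏_i c_i^{x_i} / ∏_{j=1}^{x_i} θ_i(j)`,
extended by `0` outside `ℤ^m_{≥0}`. -/
noncomputable def prodForm (m : ℕ) (c : Fin m → ℝ) (θ : Fin m → ℤ → ℝ)
    (x : Fin m → ℤ) : ℝ :=
  if ∀ i, 0 ≤ x i then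
    ∏ i, (c i ^ (x i).toNat / ∏ j ∈ Finset.range (x i).toNat, θ i (j + 1))
  else 0

/-- `c` is a complex balanced equilibrium: for each complex `z`,
`∑_{k : y_k' = z} κ_k c^{y_k} = ∑_{k : y_k = z} κ_k c^{y_k}`. -/
def complexBalanced (m K : ℕ) (y y' : Fin K → Fin m → ℕ) (κ : Fin K → ℝ)
    (c : Fin m → ℝ) : Prop :=
  ∀ z : Fin m → ℕ, ((∃ k, y k = z) ∨ (∃ k, y' k = z)) →
    ∑ k ∈ Finset.univ.filter (fun k => y' k = z), κ k * ∏ i, c i ^ y k i =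
    ∑ k ∈ Finset.univ.filter (fun k => y k = z), κ k * ∏ i, c i ^ y k i

/-- The stationarity equation:
`∑_k μ(x - y_k' + y_k) λ_k(x - y_k' + y_k) = μ(x) ∑_k λ_k(x)` for all `x ∈ ℤ^m_{≥0}`. -/
def stationaryEq (m K : ℕ) (y y' : Fin K → Fin m → ℕ)
    (μ : (Fin m → ℤ) → ℝ) (lam : Fin K → (Fin m → ℤ) → ℝ) : Prop :=
  ∀ x : Fin m → ℕ,
    ∑ k : Fin K, μ (fun i => (x i : ℤ) - y' k i + y k i) *
        lam k (fun i => (x i : ℤ) - y' k i + y k i)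
      = μ (fun i => (x i : ℤ)) * ∑ k : Fin K, lam k (fun i => (x i : ℤ))

/-- The one-step (directed) edge relation of the reaction graph: `a → b` iff some
reaction has source `a` and product `b`. -/
def reactionEdge (m K : ℕ) (y y' : Fin K → Fin m → ℕ) (a b : Fin m → ℕ) : Prop :=
  ∃ k, y k = a ∧ y' k = b

/-!
Weak reversibility gives a positive solution `ψ` of the linear balance equations
`∑_{y_k' = z} κ_k ψ(y_k) = ∑_{y_k = z} κ_k ψ(y_k)`: on each linkage class the net-flux operator
has a nonzero kernel vector because its values sum to zero over the class, the positive part of a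
kernel vector is again one, and positivity propagates along reactions. Deficiency zero says that
the image of `v ↦ (⟨y_k' - y_k, v⟩)_k` (of dimension `s`) fills the space of all differences
`(F(y_k') - F(y_k))_k` of functions on complexes (of dimension `|C| - ℓ`), so
`log ψ(y_k') - log ψ(y_k) = ⟨y_k' - y_k, v⟩` for some `v`. Then `c = exp v` satisfies
`c^y = h(y) ψ(y)` with `h` constant along reactions, and such a rescaling preserves balance.
-/

namespace ReactionNetwork

variable {V R : Type*}

def Edge (src tgt : R → V) (a b : V) : Prop := ∃ k, src k = a ∧ tgt k = b

lemma reflTransGen_edge_symm {src tgt : R → V}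
    (hwr : ∀ k, Relation.ReflTransGen (Edge src tgt) (tgt k) (src k))
    {a b : V} (h : Relation.ReflTransGen (Edge src tgt) a b) :
    Relation.ReflTransGen (Edge src tgt) b a := by
  induction h with
  | refl => exact .refl
  | tail _ hbc ih =>
    obtain ⟨k, rfl, rfl⟩ := hbc
    exact (hwr k).trans ih

variable [Fintype R] [DecidableEq V] (src tgt : R → V) (κ : R → ℝ)

def inflow (f : V → ℝ) (z : V) : ℝ := ∑ k ∈ univ.filter (fun k => tgt k = z), κ k * f (src k)

def outflow (f : V → ℝ) (z : V) : ℝ := ∑ k ∈ univ.filter (fun k => src k = z), κ k * f (src k)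

def netFlux : (V → ℝ) →ₗ[ℝ] V → ℝ where
  toFun f z := inflow src tgt κ f z - outflow src κ f z
  map_add' f g := by
    ext z
    simp only [inflow, outflow, Pi.add_apply, mul_add, sum_add_distrib]
    ring
  map_smul' c f := by
    ext z
    simp only [inflow, outflow, Pi.smul_apply, smul_eq_mul, RingHom.id_apply, mul_sub, mul_sum,
      mul_left_comm]

variable {src tgt κ}

lemma netFlux_apply (f : V → ℝ) (z : V) :
    netFlux src tgt κ f z = inflow src tgt κ f z - outflow src κ f z := rfl

lemma sum_netFlux_eq_zero {S : Finset V} (hS : ∀ k, src k ∈ S ↔ tgt k ∈ S) (f : V → ℝ) :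
    ∑ z ∈ S, netFlux src tgt κ f z = 0 := by
  simp only [netFlux_apply, inflow, outflow, sum_sub_distrib, sum_fiberwise_eq_sum_filter]
  rw [sub_eq_zero]
  exact sum_congr (filter_congr fun k _ => (hS k).symm) fun _ _ => rfl

lemma netFlux_eq_zero_of_notMem {S : Finset V} (hS : ∀ k, src k ∈ S ↔ tgt k ∈ S)
    {f : V → ℝ} (hf : ∀ w ∉ S, f w = 0) {z : V} (hz : z ∉ S) :
    netFlux src tgt κ f z = 0 := by
  have hin : inflow src tgt κ f z = 0 := sum_eq_zero fun k hk => by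
    obtain rfl := (mem_filter.mp hk).2
    rw [hf (src k) (mt (hS k).mp hz), mul_zero]
  have hout : outflow src κ f z = 0 := sum_eq_zero fun k hk => by
    rw [(mem_filter.mp hk).2, hf z hz, mul_zero]
  rw [netFlux_apply, hin, hout, sub_zero]

lemma netFlux_posPart_nonneg (hκ : ∀ k, 0 ≤ κ k) {f : V → ℝ} {z : V}
    (hf : netFlux src tgt κ f z = 0) : 0 ≤ netFlux src tgt κ (fun w => max (f w) 0) z := by
  have hin : inflow src tgt κ f z ≤ inflow src tgt κ (fun w => max (f w) 0) z :=
    sum_le_sum fun k _ => mul_le_mul_of_nonneg_left (le_max_left _ _) (hκ k)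
  have hin0 : 0 ≤ inflow src tgt κ (fun w => max (f w) 0) z :=
    sum_nonneg fun k _ => mul_nonneg (hκ k) (le_max_right _ _)
  rw [netFlux_apply] at hf ⊢
  rcases le_total 0 (f z) with hz | hz
  · have hout : outflow src κ (fun w => max (f w) 0) z = outflow src κ f z :=
      sum_congr rfl fun k hk => by simp only [(mem_filter.mp hk).2, max_eq_left hz]
    linarith
  · have hout : outflow src κ (fun w => max (f w) 0) z = 0 :=
      sum_eq_zero fun k hk => by simp only [(mem_filter.mp hk).2, max_eq_right hz, mul_zero]
    linarith

lemma netFlux_posPart_eq_zero (hκ : ∀ k, 0 ≤ κ k) {S : Finset V}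
    (hS : ∀ k, src k ∈ S ↔ tgt k ∈ S) {f : V → ℝ} (hfS : ∀ w ∉ S, f w = 0)
    (hf : netFlux src tgt κ f = 0) : netFlux src tgt κ (fun w => max (f w) 0) = 0 := by
  have hnonneg z : 0 ≤ netFlux src tgt κ (fun w => max (f w) 0) z :=
    netFlux_posPart_nonneg hκ (congrFun hf z)
  have hS0 := (sum_eq_zero_iff_of_nonneg fun z _ => hnonneg z).mp (sum_netFlux_eq_zero hS _)
  ext z
  by_cases hz : z ∈ S
  · exact hS0 z hz
  · exact netFlux_eq_zero_of_notMem hS (fun w hw => by simp [hfS w hw]) hz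

lemma exists_ne_zero_netFlux_eq_zero {S : Finset V} (hS : ∀ k, src k ∈ S ↔ tgt k ∈ S)
    (hne : S.Nonempty) :
    ∃ f : V → ℝ, f ≠ 0 ∧ (∀ w ∉ S, f w = 0) ∧ netFlux src tgt κ f = 0 := by
  let ext := Function.ExtendByZero.linearMap ℝ ((↑) : S → V)
  let T := LinearMap.funLeft ℝ ℝ ((↑) : S → V) ∘ₗ netFlux src tgt κ ∘ₗ ext
  -- `T` misses the constant function `1`, since its values sum to zero over `S`.
  have hsum g : ∑ s, T g s = 0 :=
    (sum_coe_sort S (netFlux src tgt κ (ext g))).trans (sum_netFlux_eq_zero hS _)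
  have hT : ¬ Function.Surjective T := fun h => by
    obtain ⟨g, hg⟩ := h 1
    have hs := hsum g
    rw [hg] at hs
    simp [hne.ne_empty] at hs
  obtain ⟨g, hgT, hg0⟩ : ∃ g, T g = 0 ∧ g ≠ 0 := by
    by_contra! h
    exact hT (LinearMap.injective_iff_surjective.mp ((injective_iff_map_eq_zero T).mpr h))
  have hextS (s : S) : ext g s = g s := Subtype.val_injective.extend_apply g 0 s
  have hext (w : V) (hw : w ∉ S) : ext g w = 0 :=
    Function.extend_apply' _ _ _ fun ⟨s, hs⟩ => hw (hs ▸ s.2)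
  refine ⟨ext g, fun h => hg0 (funext fun s => by simpa [hextS] using congrFun h s), hext, ?_⟩
  ext z
  by_cases hz : z ∈ S
  · simpa [T, hextS] using congrFun hgT ⟨z, hz⟩
  · exact netFlux_eq_zero_of_notMem hS hext hz

lemma exists_nonneg_netFlux_eq_zero (hκ : ∀ k, 0 ≤ κ k) {S : Finset V}
    (hS : ∀ k, src k ∈ S ↔ tgt k ∈ S) (hne : S.Nonempty) :
    ∃ f : V → ℝ, (∀ w, 0 ≤ f w) ∧ (∀ w ∉ S, f w = 0) ∧ (∃ z, 0 < f z) ∧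
      netFlux src tgt κ f = 0 := by
  have posPart (g : V → ℝ) (hgS : ∀ w ∉ S, g w = 0) (hg : netFlux src tgt κ g = 0) (z : V)
      (hz : 0 < g z) : ∃ f : V → ℝ, (∀ w, 0 ≤ f w) ∧ (∀ w ∉ S, f w = 0) ∧ (∃ z, 0 < f z) ∧
        netFlux src tgt κ f = 0 :=
    ⟨fun w => max (g w) 0, fun w => le_max_right _ _, fun w hw => by simp [hgS w hw],
      ⟨z, lt_max_of_lt_left hz⟩, netFlux_posPart_eq_zero hκ hS hgS hg⟩
  obtain ⟨f, hf0, hfS, hf⟩ := exists_ne_zero_netFlux_eq_zero (κ := κ) hS hne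
  obtain ⟨z, hz⟩ := Function.ne_iff.mp hf0
  rcases hz.lt_or_gt with hz | hz
  · exact posPart (-f) (fun w hw => by simp [hfS w hw]) (by rw [map_neg, hf, neg_zero]) z
      (by simpa using hz)
  · exact posPart f hfS hf z hz

lemma pos_of_edge (hκ : ∀ k, 0 < κ k) {f : V → ℝ} (hf0 : ∀ w, 0 ≤ f w)
    (hf : netFlux src tgt κ f = 0) {k : R} (hk : 0 < f (src k)) : 0 < f (tgt k) := by
  refine (hf0 _).lt_of_ne' fun h0 => ?_
  have hout : outflow src κ f (tgt k) = 0 :=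
    sum_eq_zero fun j hj => by rw [(mem_filter.mp hj).2, h0, mul_zero]
  have hin : κ k * f (src k) ≤ inflow src tgt κ f (tgt k) :=
    single_le_sum (fun j _ => mul_nonneg (hκ j).le (hf0 _)) (by simp)
  have hbal := congrFun hf (tgt k)
  rw [netFlux_apply, hout, Pi.zero_apply, sub_zero] at hbal
  linarith [mul_pos (hκ k) hk]

lemma pos_of_reflTransGen (hκ : ∀ k, 0 < κ k) {f : V → ℝ} (hf0 : ∀ w, 0 ≤ f w)
    (hf : netFlux src tgt κ f = 0) {a b : V} (hab : Relation.ReflTransGen (Edge src tgt) a b)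
    (ha : 0 < f a) : 0 < f b := by
  induction hab with
  | refl => exact ha
  | tail _ hbc ih =>
    obtain ⟨k, rfl, rfl⟩ := hbc
    exact pos_of_edge hκ hf0 hf ih

lemma exists_nonneg_netFlux_eq_zero_pos_src (hκ : ∀ k, 0 < κ k)
    (hwr : ∀ k, Relation.ReflTransGen (Edge src tgt) (tgt k) (src k)) (k₀ : R) :
    ∃ f : V → ℝ, (∀ w, 0 ≤ f w) ∧ 0 < f (src k₀) ∧ netFlux src tgt κ f = 0 := by
  classical
  let S :=
    (univ.image src ∪ univ.image tgt).filter (Relation.ReflTransGen (Edge src tgt) (src k₀))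
  have hS k : src k ∈ S ↔ tgt k ∈ S := by
    simp only [S, mem_filter, mem_union, mem_image, mem_univ, true_and, exists_apply_eq_apply,
      true_or, or_true]
    exact ⟨fun h => h.tail ⟨k, rfl, rfl⟩, fun h => h.trans (hwr k)⟩
  have hne : S.Nonempty := ⟨src k₀, by simp [S, Relation.ReflTransGen.refl]⟩
  obtain ⟨f, hf0, hfS, ⟨z, hz⟩, hf⟩ :=
    exists_nonneg_netFlux_eq_zero (κ := κ) (fun k => (hκ k).le) hS hne
  have hzS : z ∈ S := by_contra fun h => hz.ne' (hfS z h)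
  exact ⟨f, hf0, pos_of_reflTransGen hκ hf0 hf (reflTransGen_edge_symm hwr (mem_filter.mp hzS).2)
    hz, hf⟩

theorem exists_netFlux_eq_zero_pos_src (hκ : ∀ k, 0 < κ k)
    (hwr : ∀ k, Relation.ReflTransGen (Edge src tgt) (tgt k) (src k)) :
    ∃ ψ : V → ℝ, (∀ k, 0 < ψ (src k)) ∧ netFlux src tgt κ ψ = 0 := by
  choose f hf0 hfpos hf using exists_nonneg_netFlux_eq_zero_pos_src hκ hwr
  refine ⟨∑ k, f k, fun k => ?_, by simp [map_sum, hf]⟩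
  rw [Finset.sum_apply]
  exact (hfpos k).trans_le
    (single_le_sum (f := fun j => f j (src k)) (fun j _ => hf0 j _) (mem_univ k))

lemma netFlux_eq_zero_of_eq_mul {ψ φ h : V → ℝ} (hψ : netFlux src tgt κ ψ = 0)
    (hh : ∀ k, h (src k) = h (tgt k)) (hφ : ∀ k, φ (src k) = h (src k) * ψ (src k)) :
    netFlux src tgt κ φ = 0 := by
  ext z
  have hin : inflow src tgt κ φ z = h z * inflow src tgt κ ψ z := by
    rw [inflow, inflow, mul_sum]
    exact sum_congr rfl fun k hk => by rw [hφ, hh, (mem_filter.mp hk).2]; ring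
  have hout : outflow src κ φ z = h z * outflow src κ ψ z := by
    rw [outflow, outflow, mul_sum]
    exact sum_congr rfl fun k hk => by rw [hφ, (mem_filter.mp hk).2]; ring
  rw [netFlux_apply, hin, hout, ← mul_sub, ← netFlux_apply, hψ, Pi.zero_apply, mul_zero]

section Deficiency

open Module

variable {m K : ℕ} (y y' : Fin K → Fin m → ℕ)

def complexes : Set (Fin m → ℕ) := Set.range y ∪ Set.range y'

def linkageClass (z : Fin m → ℕ) : Set (Fin m → ℕ) :=
  {w ∈ complexes y y' | Relation.EqvGen (reactionEdge m K y y') z w}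

def linkageClasses : Set (Set (Fin m → ℕ)) :=
  {t | ∃ z ∈ complexes y y', t = linkageClass y y' z}

instance : Finite (complexes y y') := ((Set.finite_range y).union (Set.finite_range y')).to_subtype

def reactionDiff : (complexes y y' → ℝ) →ₗ[ℝ] Fin K → ℝ :=
  LinearMap.pi fun k => LinearMap.proj ⟨y' k, Or.inr ⟨k, rfl⟩⟩ - LinearMap.proj ⟨y k, Or.inl ⟨k, rfl⟩⟩

variable {y y'}

lemma linkageClass_eq {a b : Fin m → ℕ} (hab : Relation.EqvGen (reactionEdge m K y y') a b) :
    linkageClass y y' a = linkageClass y y' b := by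
  ext w
  exact and_congr_right fun _ => ⟨(hab.symm _ _).trans _ _ _, hab.trans _ _ _⟩

lemma ncard_linkageClasses_le_finrank_ker :
    (linkageClasses y y').ncard ≤ finrank ℝ (LinearMap.ker (reactionDiff y y')) := by
  let cls : complexes y y' → linkageClasses y y' := fun z => ⟨linkageClass y y' z, z, z.2, rfl⟩
  have hcls : Function.Surjective cls := by
    rintro ⟨t, z, hz, rfl⟩
    exact ⟨⟨z, hz⟩, rfl⟩
  have : Finite (linkageClasses y y') := .of_surjective cls hcls
  have : Fintype (linkageClasses y y') := .ofFinite _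
  let G := LinearMap.funLeft ℝ ℝ cls
  have hG : LinearMap.range G ≤ LinearMap.ker (reactionDiff y y') := by
    rintro _ ⟨g, rfl⟩
    ext k
    simp only [G, cls, reactionDiff, LinearMap.funLeft_apply, LinearMap.pi_apply,
      LinearMap.sub_apply, LinearMap.proj_apply, Pi.zero_apply, sub_eq_zero]
    exact congrArg g (Subtype.ext (linkageClass_eq (.rel _ _ ⟨k, rfl, rfl⟩)).symm)
  calc (linkageClasses y y').ncard = finrank ℝ (linkageClasses y y' → ℝ) := by
        rw [finrank_fintype_fun_eq_card, Fintype.card_eq_nat_card, Nat.card_coe_set_eq]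
    _ = finrank ℝ (LinearMap.range G) :=
        (LinearMap.finrank_range_of_inj (LinearMap.funLeft_injective_of_surjective _ _ _ hcls)).symm
    _ ≤ _ := Submodule.finrank_mono hG

theorem exists_potential_of_deficiency_zero
    (hdef : (complexes y y').ncard = (linkageClasses y y').ncard + finrank ℝ (Submodule.span ℝ
      (Set.range fun k : Fin K => fun i : Fin m => ((y' k i : ℝ) - (y k i : ℝ)))))
    (F : (Fin m → ℕ) → ℝ) :
    ∃ v : Fin m → ℝ, ∀ k, F (y' k) - F (y k) = ∑ i, ((y' k i : ℝ) - y k i) * v i := by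
  let N : Matrix (Fin K) (Fin m) ℝ := Matrix.of fun k i => (y' k i : ℝ) - y k i
  have hle : LinearMap.range N.mulVecLin ≤ LinearMap.range (reactionDiff y y') := by
    rintro _ ⟨v, rfl⟩
    refine ⟨fun z => ∑ i, (z.1 i : ℝ) * v i, funext fun k => ?_⟩
    simp [reactionDiff, N, Matrix.mulVec, dotProduct, sub_mul]
  have hrank : finrank ℝ (LinearMap.range (reactionDiff y y')) ≤
      finrank ℝ (LinearMap.range N.mulVecLin) := by
    have : Fintype (complexes y y') := .ofFinite _
    have hsum := LinearMap.finrank_range_add_finrank_ker (reactionDiff y y')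
    rw [finrank_fintype_fun_eq_card, Fintype.card_eq_nat_card, Nat.card_coe_set_eq, hdef] at hsum
    have hN : finrank ℝ (LinearMap.range N.mulVecLin) = finrank ℝ (Submodule.span ℝ
        (Set.range fun k : Fin K => fun i : Fin m => ((y' k i : ℝ) - (y k i : ℝ)))) :=
      N.rank_eq_finrank_span_row
    linarith [ncard_linkageClasses_le_finrank_ker (y := y) (y' := y')]
  obtain ⟨v, hv⟩ : reactionDiff y y' (fun z => F z) ∈ LinearMap.range N.mulVecLin :=
    (Submodule.eq_of_le_of_finrank_le hle hrank).symm ▸ LinearMap.mem_range_self _ _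
  refine ⟨v, fun k => ?_⟩
  simpa [reactionDiff, N, Matrix.mulVec, dotProduct] using (congrFun hv k).symm

end Deficiency

lemma complexBalanced_of_netFlux_eq_zero {m K : ℕ} {y y' : Fin K → Fin m → ℕ} {κ : Fin K → ℝ}
    {c : Fin m → ℝ} (h : netFlux y y' κ (fun z => ∏ i, c i ^ z i) = 0) :
    complexBalanced m K y y' κ c :=
  fun z _ => sub_eq_zero.mp (congrFun h z)

end ReactionNetwork

open ReactionNetwork

theorem stmt18_general (m K : ℕ) (y y' : Fin K → Fin m → ℕ)
    (hwr : ∀ k : Fin K,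
      Relation.ReflTransGen (reactionEdge m K y y') (y' k) (y k))
    (hdef : (Set.range y ∪ Set.range y').ncard =
      {t : Set (Fin m → ℕ) | ∃ z ∈ Set.range y ∪ Set.range y',
          t = {w ∈ Set.range y ∪ Set.range y' |
            Relation.EqvGen (reactionEdge m K y y') z w}}.ncard
        + Module.finrank ℝ (Submodule.span ℝ
            (Set.range (fun k : Fin K => fun i : Fin m => ((y' k i : ℝ) - (y k i : ℝ)))))) :
    ∀ κ : Fin K → ℝ, (∀ k, 0 < κ k) →
      ∃ c : Fin m → ℝ, (∀ i, 0 < c i) ∧ complexBalanced m K y y' κ c := by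
  intro κ hκ
  obtain ⟨ψ, hψ, hbal⟩ := exists_netFlux_eq_zero_pos_src (src := y) (tgt := y') hκ hwr
  obtain ⟨v, hv⟩ := exists_potential_of_deficiency_zero hdef fun z => Real.log (ψ z)
  let h (z : Fin m → ℕ) : ℝ := Real.exp (∑ i, (z i : ℝ) * v i - Real.log (ψ z))
  have hh k : h (y k) = h (y' k) := by
    have hk := hv k
    simp only [sub_mul, sum_sub_distrib] at hk
    simp only [h]
    congr 1
    linarith
  have hexp (z : Fin m → ℕ) : ∏ i, Real.exp (v i) ^ z i = Real.exp (∑ i, (z i : ℝ) * v i) := by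
    simp only [← Real.exp_nat_mul, Real.exp_sum]
  refine ⟨fun i => Real.exp (v i), fun i => Real.exp_pos _, complexBalanced_of_netFlux_eq_zero ?_⟩
  refine netFlux_eq_zero_of_eq_mul hbal hh fun k => ?_
  simp only [hexp, h]
  rw [Real.exp_sub, Real.exp_log (hψ k), div_mul_cancel₀ _ (hψ k).ne']

/-- (Deficiency zero theorem.) If the network is weakly reversible
(for each reaction there is a directed path from its product complex back to its
source complex) and has deficiency zero (`|C| = ℓ + s`, where `ℓ` is the number of
linkage classes — the classes of the equivalence relation generated by the edge
relation, restricted to the set of complexes — and `s` is the dimension of the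
stoichiometric subspace), then for every choice of positive rate constants there
exists a positive complex balanced equilibrium. -/
theorem stmt18 (m K : ℕ) (y y' : Fin K → Fin m → ℕ)
    (hyy' : ∀ k, y k ≠ y' k)
    (hwr : ∀ k : Fin K,
      Relation.ReflTransGen (reactionEdge m K y y') (y' k) (y k))
    (hdef : (Set.range y ∪ Set.range y').ncard =
      {t : Set (Fin m → ℕ) | ∃ z ∈ Set.range y ∪ Set.range y',
          t = {w ∈ Set.range y ∪ Set.range y' |
            Relation.EqvGen (reactionEdge m K y y') z w}}.ncard
        + Module.finrank ℝ (Submodule.span ℝ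
            (Set.range (fun k : Fin K => fun i : Fin m => ((y' k i : ℝ) - (y k i : ℝ)))))) :
    ∀ κ : Fin K → ℝ, (∀ k, 0 < κ k) →
      ∃ c : Fin m → ℝ, (∀ i, 0 < c i) ∧ complexBalanced m K y y' κ c :=
  stmt18_general m K y y' hwr hdef
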